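/- arXiv:math-ph/0505034 — 5 statements merged into one kernel-verified Lean document; each statement's English description precedes it below -/
import Mathlib

section
/- Let k ≥ 1 and 1 ≤ p ≤ k-1 with p ≤ k/2, and let P be a prime dividing gcd(k,p). Then binom(k,p) / binom(k/P, p/P) ≥ k - p + 1 ≥ k/2 + 1. -/
open Finset Nat

lemma descF_prod (n r : ℕ) (h : r ≤ n) :
    n.descFactorial r = ∏ j ∈ range r, (n - r + 1 + j) := by
  rw [Nat.descFactorial_eq_prod_range, ← Finset.prod_range_reflect]
  exact Finset.prod_congr rfl fun j hj => by
    simp only [Finset.mem_range] at hj; omega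

lemma key (k p P : ℕ) (hp1 : 1 ≤ p) (hpk : p ≤ k) (hP2 : 2 ≤ P)
    (hk : P ∣ k) (hp : P ∣ p) :
    (k - p + 1) * ((k / P).choose (p / P)) ≤ k.choose p := by
  set m := k / P with hm
  set q := p / P with hq
  have hPpos : 0 < P := by omega
  have hkm : k = P * m := (Nat.div_mul_cancel hk).symm.trans (mul_comm _ _)
  have hpq : p = P * q := (Nat.div_mul_cancel hp).symm.trans (mul_comm _ _)
  have hqm : q ≤ m := Nat.div_le_div_right hpk
  have hkp : k - p = P * (m - q) := by
    have h1 : P * m = P * q + P * (m - q) := by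
      rw [← mul_add]
      congr 1
      omega
    omega
  set e : ℕ → ℕ := fun t => P * t + (P - 1) with he
  have hinj : Set.InjOn e (range q) := by
    intro a _ b _ hab
    simp only [he] at hab
    have : P * a = P * b := by omega
    exact Nat.eq_of_mul_eq_mul_left hPpos this
  set S : Finset ℕ := (range q).image e with hS
  have hSsub : S ⊆ range p := by
    intro j hj
    simp only [hS, Finset.mem_image, Finset.mem_range] at hj ⊢
    obtain ⟨t, ht, rfl⟩ := hj
    have h1 : P * (t + 1) ≤ P * q := Nat.mul_le_mul_left P (by omega)
    have h2 : P * (t + 1) = P * t + P := by ring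
    simp only [he]
    omega
  set T : Finset ℕ := range p \ S with hT
  have h0T : 0 ∈ T := by
    simp only [hT, Finset.mem_sdiff, Finset.mem_range, hS, Finset.mem_image,
      Finset.mem_range]
    refine ⟨by omega, ?_⟩
    rintro ⟨t, ht, hte⟩
    simp only [he] at hte
    omega
  have hterm : ∀ x, k - p + 1 + e x = P * (m - q + 1 + x) := by
    intro x
    have h1 : P * (m - q + 1 + x) = P * (m - q) + P * x + P := by ring
    simp only [he]
    omega
  have hdesc : k.descFactorial p
      = (∏ j ∈ T, (k - p + 1 + j)) * (P ^ q * m.descFactorial q) := by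
    rw [descF_prod k p hpk, ← Finset.prod_sdiff hSsub, ← hT]
    congr 1
    rw [hS, Finset.prod_image hinj]
    rw [descF_prod m q hqm]
    calc ∏ x ∈ range q, (k - p + 1 + e x)
        = ∏ x ∈ range q, (P * (m - q + 1 + x)) := by
          exact Finset.prod_congr rfl fun x _ => hterm x
      _ = (∏ _x ∈ range q, P) * ∏ x ∈ range q, (m - q + 1 + x) :=
          Finset.prod_mul_distrib
      _ = P ^ q * ∏ x ∈ range q, (m - q + 1 + x) := by
          rw [Finset.prod_const, Finset.card_range]
  have hfact : p ! = (∏ j ∈ T, (j + 1)) * (P ^ q * q !) := by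
    rw [← Finset.prod_range_add_one_eq_factorial p, ← Finset.prod_sdiff hSsub, ← hT]
    congr 1
    rw [hS, Finset.prod_image hinj]
    rw [← Finset.prod_range_add_one_eq_factorial q]
    calc ∏ x ∈ range q, (e x + 1)
        = ∏ x ∈ range q, (P * (x + 1)) := by
          refine Finset.prod_congr rfl fun x _ => ?_
          simp only [he]
          have : P * (x + 1) = P * x + P := by ring
          omega
      _ = (∏ _x ∈ range q, P) * ∏ x ∈ range q, (x + 1) :=
          Finset.prod_mul_distrib
      _ = P ^ q * ∏ x ∈ range q, (x + 1) := by
          rw [Finset.prod_const, Finset.card_range]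
  -- core inequality over T
  have h1 : ∏ j ∈ T, (j + 1) = ∏ j ∈ T.erase 0, (j + 1) := by
    rw [← Finset.mul_prod_erase T _ h0T]
    simp
  have h2 : ∏ j ∈ T, (k - p + 1 + j) = (k - p + 1) * ∏ j ∈ T.erase 0, (k - p + 1 + j) := by
    rw [← Finset.mul_prod_erase T _ h0T]
  have h3 : ∏ j ∈ T.erase 0, (j + 1) ≤ ∏ j ∈ T.erase 0, (k - p + 1 + j) :=
    Finset.prod_le_prod' fun i _ => by omega
  have hcore : (k - p + 1) * ∏ j ∈ T, (j + 1) ≤ ∏ j ∈ T, (k - p + 1 + j) := by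
    rw [h1, h2]
    exact Nat.mul_le_mul le_rfl h3
  -- assemble product inequality
  have hprod : (k - p + 1) * m.descFactorial q * p ! ≤ k.descFactorial p * q ! := by
    rw [hdesc, hfact]
    calc (k - p + 1) * m.descFactorial q * ((∏ j ∈ T, (j + 1)) * (P ^ q * q !))
        = ((k - p + 1) * ∏ j ∈ T, (j + 1)) * (m.descFactorial q * (P ^ q * q !)) := by
          ring
      _ ≤ (∏ j ∈ T, (k - p + 1 + j)) * (m.descFactorial q * (P ^ q * q !)) :=
          Nat.mul_le_mul hcore le_rfl
      _ = (∏ j ∈ T, (k - p + 1 + j)) * (P ^ q * m.descFactorial q) * q ! := by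
          ring
  -- convert to choose
  rw [Nat.descFactorial_eq_factorial_mul_choose, Nat.descFactorial_eq_factorial_mul_choose]
    at hprod
  have hfacpos : 0 < p ! * q ! := Nat.mul_pos (Nat.factorial_pos p) (Nat.factorial_pos q)
  refine Nat.le_of_mul_le_mul_left ?_ hfacpos
  calc (p ! * q !) * ((k - p + 1) * ((k / P).choose (p / P)))
      = (k - p + 1) * (q ! * m.choose q) * p ! := by rw [← hm, ← hq]; ring
    _ ≤ p ! * k.choose p * q ! := hprod
    _ = (p ! * q !) * k.choose p := by ring

theorem stmt5 (k p P : ℕ) (hp1 : 1 ≤ p) (hpk : p ≤ k - 1) (hp2 : 2 * p ≤ k)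
    (hP : P.Prime) (hPdvd : P ∣ Nat.gcd k p) :
    (k.choose p : ℝ) / ((k / P).choose (p / P) : ℝ) ≥ (k : ℝ) - p + 1 ∧
    (k : ℝ) - p + 1 ≥ (k : ℝ) / 2 + 1 := by
  have hPk : P ∣ k := hPdvd.trans (Nat.gcd_dvd_left k p)
  have hPp : P ∣ p := hPdvd.trans (Nat.gcd_dvd_right k p)
  have hple : p ≤ k := by omega
  have hkey := key k p P hp1 hple hP.two_le hPk hPp
  have hqm : p / P ≤ k / P := Nat.div_le_div_right hple
  have hpos : 0 < (k / P).choose (p / P) := Nat.choose_pos hqm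
  have hposR : (0 : ℝ) < ((k / P).choose (p / P) : ℝ) := by exact_mod_cast hpos
  constructor
  · rw [ge_iff_le, le_div_iff₀ hposR]
    have hc : (((k - p + 1) * ((k / P).choose (p / P)) : ℕ) : ℝ) ≤ ((k.choose p : ℕ) : ℝ) :=
      Nat.cast_le.2 hkey
    push_cast [hple] at hc
    linarith
  · have h2 : (2 * p : ℝ) ≤ (k : ℝ) := by exact_mod_cast hp2
    linarith
end

section
/- There exist constants C > 0 and K > 0 such that for all integers k ≥ K and all degrees 1 ≤ p ≤ k-1, the proportion of binary sequences η ∈ {0,1}^k with exactly p ones whose primitive period under the cyclic shift is strictly less than k is at most C·(log k)/k. That is, #{η ∈ {0,1}^k : deg(η) = p, per(η) < k} / binom(k,p) ≤ C (log k)/k. -/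
/-- the cyclic shift on binary sequences of length `k`. -/
def cycShift (k : ℕ) (η : Fin k → Bool) : Fin k → Bool :=
  fun i => η ⟨(i.val + 1) % k, Nat.mod_lt _ i.pos⟩

/-- the primitive period of `η` under the cyclic shift. -/
noncomputable def primPeriod (k : ℕ) (η : Fin k → Bool) : ℕ :=
  sInf {ℓ : ℕ | 1 ≤ ℓ ∧ (cycShift k)^[ℓ] η = η}

/-- the degree of `η`: the number of indices with `η i = true`. -/
def degree (k : ℕ) (η : Fin k → Bool) : ℕ :=
  (Finset.univ.filter fun i : Fin k => η i = true).card

/-!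
A sequence of primitive period `d < k` is fixed by the `d`-fold shift, where `d` is a proper
divisor of `k` and `q = k / d ≥ 2`; it is then the `q`-fold repetition of a block of length `d`
and degree `m = p / q`. There are at most `c = C(d, m)` such blocks, and since `c ^ q ≤ C(k, p)`
(Vandermonde) and `c ≥ max d 2`, their number is at most
`C(k, p) / c ^ (q - 1) ≤ 4 C(k, p) q / (k 2 ^ q)`. Summing over the divisors `q` of `k` with
`∑ q / 2 ^ q = 2` bounds the proportion by `8 / k`.
-/

open Finset Function

theorem cycShift_iterate_apply {k : ℕ} (ℓ : ℕ) (η : Fin k → Bool) (i : Fin k) :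
    (cycShift k)^[ℓ] η i = η ⟨(i + ℓ) % k, Nat.mod_lt _ i.pos⟩ := by
  induction ℓ generalizing η with
  | zero => simp [Nat.mod_eq_of_lt i.isLt]
  | succ ℓ ih =>
    rw [iterate_succ_apply, ih]
    simp only [cycShift, Nat.mod_add_mod, Nat.add_assoc]

theorem isPeriodicPt_cycShift_self (k : ℕ) (η : Fin k → Bool) :
    IsPeriodicPt (cycShift k) k η := by
  funext i
  simp [cycShift_iterate_apply, Nat.mod_eq_of_lt i.isLt]

theorem primPeriod_eq_minimalPeriod {k : ℕ} (hk : 0 < k) (η : Fin k → Bool) :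
    primPeriod k η = minimalPeriod (cycShift k) η := by
  have hper : η ∈ periodicPts (cycShift k) := mk_mem_periodicPts hk (isPeriodicPt_cycShift_self k η)
  have hmem : primPeriod k η ∈ {ℓ : ℕ | 1 ≤ ℓ ∧ (cycShift k)^[ℓ] η = η} :=
    Nat.sInf_mem ⟨k, hk, isPeriodicPt_cycShift_self k η⟩
  exact le_antisymm
    (Nat.sInf_le ⟨minimalPeriod_pos_of_mem_periodicPts hper, isPeriodicPt_minimalPeriod _ _⟩)
    (IsPeriodicPt.minimalPeriod_le hmem.1 hmem.2)

theorem apply_eq_apply_mod_of_isPeriodicPt_cycShift {k d : ℕ} {η : Fin k → Bool}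
    (h : IsPeriodicPt (cycShift k) d η) (i : Fin k) :
    η i = η ⟨i % d, (Nat.mod_le _ _).trans_lt i.isLt⟩ := by
  have := congrFun (h.mul_const (i / d)) ⟨i % d, (Nat.mod_le _ _).trans_lt i.isLt⟩
  rw [cycShift_iterate_apply] at this
  rw [← this]
  congr 1
  ext
  simp only [Nat.mod_add_div, Nat.mod_eq_of_lt i.isLt]

theorem degree_eq_mul_of_apply_eq_mod {k d q : ℕ} (hd : 0 < d) (hk : d * q = k)
    {η : Fin k → Bool} {ξ : Fin d → Bool} (h : ∀ i : Fin k, η i = ξ ⟨i % d, Nat.mod_lt _ hd⟩) :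
    degree k η = q * degree d ξ := by
  subst hk
  let e : Fin q × Fin d ≃ Fin (d * q) := finProdFinEquiv.trans (finCongr (mul_comm q d))
  have he : ∀ x, (e x : ℕ) % d = x.2 := fun x => by
    simp [e, finProdFinEquiv, Nat.mod_eq_of_lt x.2.isLt]
  calc degree (d * q) η = #((univ : Finset (Fin q)) ×ˢ univ.filter (ξ · = true)) := by
        refine (card_equiv e fun x => ?_).symm
        simp only [mem_product, mem_univ, true_and, mem_filter, h]
        rw [show (⟨(e x : ℕ) % d, _⟩ : Fin d) = x.2 from Fin.ext (he x)]
    _ = q * degree d ξ := by rw [card_product, card_univ, Fintype.card_fin, degree]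

theorem card_degree_eq_le (d m : ℕ) :
    Nat.card {ξ : Fin d → Bool // degree d ξ = m} ≤ d.choose m := by
  classical
  let toFinset : {ξ : Fin d → Bool // degree d ξ = m} → powersetCard m (univ : Finset (Fin d)) :=
    fun ξ => ⟨univ.filter (ξ.1 · = true), mem_powersetCard.2 ⟨subset_univ _, ξ.2⟩⟩
  have hinj : Injective toFinset := by
    intro ξ ξ' hξ
    ext i
    simpa [toFinset] using congrArg (i ∈ ·.1) hξ
  calc Nat.card {ξ : Fin d → Bool // degree d ξ = m}
      ≤ Nat.card (powersetCard m (univ : Finset (Fin d))) := Nat.card_le_card_of_injective _ hinj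
    _ = d.choose m := by simp

namespace Nat

theorem choose_mul_choose_le_choose_add (a b c e : ℕ) :
    a.choose b * c.choose e ≤ (a + c).choose (b + e) := by
  rw [add_choose_eq]
  exact single_le_sum (f := fun ij : ℕ × ℕ => a.choose ij.1 * c.choose ij.2)
    (a := (b, e)) (fun _ _ => zero_le _) (mem_antidiagonal.2 rfl)

theorem choose_pow_le_choose_mul (n m q : ℕ) : n.choose m ^ q ≤ (n * q).choose (m * q) := by
  induction q with
  | zero => simp
  | succ q ih =>
    calc n.choose m ^ (q + 1) = n.choose m ^ q * n.choose m := pow_succ _ _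
      _ ≤ (n * q).choose (m * q) * n.choose m := Nat.mul_le_mul_right _ ih
      _ ≤ (n * q + n).choose (m * q + m) := choose_mul_choose_le_choose_add _ _ _ _

theorem le_choose_of_pos_of_lt {n m : ℕ} (hm0 : 0 < m) (hmn : m < n) : n ≤ n.choose m := by
  induction n generalizing m with
  | zero => omega
  | succ n ih =>
    obtain _ | _ | m := m
    · omega
    · simp
    · rw [choose_succ_succ']
      have hn : n ≤ n.choose (m + 1) := ih (by omega) (by omega)
      have hpos : 0 < n.choose (m + 1 + 1) := choose_pos (by omega)
      omega

end Nat

theorem mul_two_pow_le_four_mul_pow {d c q : ℕ} (hq : 2 ≤ q) (hdc : d ≤ c) (hc : 2 ≤ c) :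
    d * 2 ^ q ≤ 4 * c ^ (q - 1) := by
  obtain ⟨r, rfl⟩ := Nat.exists_eq_add_of_le' hq
  calc d * 2 ^ (r + 2) = 4 * (d * 2 ^ r) := by ring
    _ ≤ 4 * (c * c ^ r) := by gcongr
    _ = 4 * c ^ (r + 2 - 1) := by rw [← pow_succ']; rfl

theorem card_periodic_le_card_degree {k d q p : ℕ} (hd : 0 < d) (hq : 0 < q) (hk : d * q = k) :
    Nat.card {η : Fin k → Bool // degree k η = p ∧ IsPeriodicPt (cycShift k) d η}
      ≤ Nat.card {ξ : Fin d → Bool // q * degree d ξ = p} := by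
  have hdk : d ≤ k := hk ▸ Nat.le_mul_of_pos_right d hq
  let restrict (η : Fin k → Bool) : Fin d → Bool := fun j => η ⟨j, j.isLt.trans_le hdk⟩
  have hext : ∀ η : Fin k → Bool, IsPeriodicPt (cycShift k) d η →
      ∀ i : Fin k, η i = restrict η ⟨i % d, Nat.mod_lt _ hd⟩ :=
    fun _ => apply_eq_apply_mod_of_isPeriodicPt_cycShift
  refine Nat.card_le_card_of_injective
    (fun η => ⟨restrict η.1, ?_⟩) fun η η' hηη' => Subtype.ext (funext fun i => ?_)
  · rw [← degree_eq_mul_of_apply_eq_mod hd hk (hext η.1 η.2.2)]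
    exact η.2.1
  · rw [hext η.1 η.2.2, hext η'.1 η'.2.2]
    exact congrFun (congrArg Subtype.val hηη') _

theorem card_periodic_mul_le {k d p : ℕ} (hdk : d ∈ k.properDivisors) (hp0 : 0 < p)
    (hpk : p < k) :
    Nat.card {η : Fin k → Bool // degree k η = p ∧ IsPeriodicPt (cycShift k) d η}
      * (d * 2 ^ (k / d)) ≤ 4 * k.choose p := by
  have hd0 : 0 < d := Nat.pos_of_mem_properDivisors hdk
  obtain ⟨⟨q, rfl⟩, hlt⟩ := Nat.mem_properDivisors.1 hdk
  have hq2 : 2 ≤ q := by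
    by_contra!
    interval_cases q <;> omega
  rw [Nat.mul_div_cancel_left _ hd0]
  have hle := card_periodic_le_card_degree (q := q) (p := p) hd0 (by omega) rfl
  by_cases hqp : q ∣ p
  · obtain ⟨m, rfl⟩ := hqp
    have hm0 : 0 < m := Nat.pos_of_mul_pos_left hp0
    have hmd : m < d := by nlinarith
    set c := d.choose m
    have hc : Nat.card {η : Fin (d * q) → Bool //
        degree (d * q) η = q * m ∧ IsPeriodicPt (cycShift (d * q)) d η} ≤ c := by
      simp only [Nat.mul_left_cancel_iff (by omega : 0 < q)] at hle
      exact hle.trans (card_degree_eq_le d m)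
    have hdc : d ≤ c := Nat.le_choose_of_pos_of_lt hm0 hmd
    calc _ ≤ c * (4 * c ^ (q - 1)) :=
          Nat.mul_le_mul hc (mul_two_pow_le_four_mul_pow hq2 hdc (by omega))
      _ = 4 * c ^ q := by rw [mul_left_comm, ← pow_succ', Nat.sub_add_cancel (by omega)]
      _ ≤ 4 * (d * q).choose (q * m) := by
          rw [mul_comm q m]; gcongr; exact Nat.choose_pow_le_choose_mul d m q
  · have hempty : Nat.card {ξ : Fin d → Bool // q * degree d ξ = p} = 0 :=
      Nat.card_eq_zero.2 (.inl ⟨fun ξ => hqp ⟨_, ξ.2.symm⟩⟩)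
    rw [Nat.le_zero.1 (hle.trans hempty.le), zero_mul]
    exact Nat.zero_le _

theorem sum_mul_half_pow_le_two (s : Finset ℕ) : ∑ q ∈ s, (q : ℝ) * (1 / 2) ^ q ≤ 2 := by
  have h := hasSum_coe_mul_geometric_of_norm_lt_one (𝕜 := ℝ) (r := 1 / 2) (by norm_num)
  rw [show (1 / 2 : ℝ) / (1 - 1 / 2) ^ 2 = 2 by norm_num] at h
  exact sum_le_hasSum s (fun _ _ => by positivity) h

theorem sum_properDivisors_inv_mul_two_pow_le (k : ℕ) :
    ∑ d ∈ k.properDivisors, ((d : ℝ) * 2 ^ (k / d))⁻¹ ≤ 2 / k := by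
  have hterm : ∀ d ∈ k.properDivisors,
      ((d : ℝ) * 2 ^ (k / d))⁻¹ = (k : ℝ)⁻¹ * (((k / d : ℕ) : ℝ) * (1 / 2) ^ (k / d)) := by
    intro d hd
    obtain ⟨⟨q, rfl⟩, hlt⟩ := Nat.mem_properDivisors.1 hd
    have hd0 : 0 < d := Nat.pos_of_mem_properDivisors hd
    have hq0 : 0 < q := Nat.pos_of_mul_pos_left (hd0.trans hlt)
    rw [Nat.mul_div_cancel_left _ hd0, one_div, inv_pow]
    push_cast
    field_simp
  calc ∑ d ∈ k.properDivisors, ((d : ℝ) * 2 ^ (k / d))⁻¹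
      = (k : ℝ)⁻¹ * ∑ d ∈ k.properDivisors, ((k / d : ℕ) : ℝ) * (1 / 2) ^ (k / d) := by
        rw [mul_sum]; exact sum_congr rfl hterm
    _ ≤ (k : ℝ)⁻¹ * ∑ d ∈ k.divisors, ((k / d : ℕ) : ℝ) * (1 / 2) ^ (k / d) := by
        gcongr
        exact Nat.properDivisors_subset_divisors
    _ = (k : ℝ)⁻¹ * ∑ q ∈ k.divisors, (q : ℝ) * (1 / 2) ^ q := by
        rw [Nat.sum_div_divisors k (fun q => (q : ℝ) * (1 / 2) ^ q)]
    _ ≤ (k : ℝ)⁻¹ * 2 := by gcongr; exact sum_mul_half_pow_le_two _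
    _ = 2 / k := by ring

theorem card_primPeriod_lt_le_sum {k : ℕ} (hk : 0 < k) (p : ℕ) :
    Nat.card {η : Fin k → Bool // degree k η = p ∧ primPeriod k η < k}
      ≤ ∑ d ∈ k.properDivisors,
          Nat.card {η : Fin k → Bool // degree k η = p ∧ IsPeriodicPt (cycShift k) d η} := by
  classical
  simp only [Nat.card_eq_fintype_card, Fintype.card_subtype]
  refine (card_le_card fun η hη => ?_).trans card_biUnion_le
  simp only [mem_filter, mem_univ, true_and, mem_biUnion, primPeriod_eq_minimalPeriod hk] at hη ⊢
  exact ⟨_, Nat.mem_properDivisors.2 ⟨(isPeriodicPt_cycShift_self k η).minimalPeriod_dvd, hη.2⟩,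
    hη.1, isPeriodicPt_minimalPeriod _ _⟩

theorem card_primPeriod_lt_le {k p : ℕ} (hp0 : 0 < p) (hpk : p < k) :
    (Nat.card {η : Fin k → Bool // degree k η = p ∧ primPeriod k η < k} : ℝ)
      ≤ 8 / k * k.choose p := by
  calc _ ≤ ∑ d ∈ k.properDivisors, (Nat.card
          {η : Fin k → Bool // degree k η = p ∧ IsPeriodicPt (cycShift k) d η} : ℝ) := by
        exact_mod_cast card_primPeriod_lt_le_sum (by omega) p
    _ ≤ ∑ d ∈ k.properDivisors, 4 * k.choose p * ((d : ℝ) * 2 ^ (k / d))⁻¹ := by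
        gcongr with d hd
        have : (0 : ℝ) < d := by exact_mod_cast Nat.pos_of_mem_properDivisors hd
        rw [le_mul_inv_iff₀ (by positivity)]
        exact_mod_cast card_periodic_mul_le hd hp0 hpk
    _ = 4 * k.choose p * ∑ d ∈ k.properDivisors, ((d : ℝ) * 2 ^ (k / d))⁻¹ := by rw [mul_sum]
    _ ≤ 4 * k.choose p * (2 / k) := by gcongr; exact sum_properDivisors_inv_mul_two_pow_le k
    _ = 8 / k * k.choose p := by ring

theorem stmt6 :
    ∃ C > (0 : ℝ), ∃ K : ℕ, ∀ k : ℕ, K ≤ k → ∀ p : ℕ, 1 ≤ p → p ≤ k - 1 →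
      (Nat.card {η : Fin k → Bool // degree k η = p ∧ primPeriod k η < k} : ℝ)
        ≤ C * Real.log k / k * (k.choose p) := by
  refine ⟨8, by norm_num, 3, fun k hk p hp hpk => ?_⟩
  have hk0 : (0 : ℝ) < k := by exact_mod_cast (by omega : 0 < k)
  have hlog : 1 ≤ Real.log k := by
    rw [Real.le_log_iff_exp_le hk0]
    exact Real.exp_one_lt_three.le.trans (by exact_mod_cast hk)
  calc _ ≤ (8 / k * k.choose p : ℝ) := card_primPeriod_lt_le (by omega) (by omega)
    _ ≤ 8 * Real.log k / k * k.choose p := by gcongr; linarith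
end

section
/- Let 0 < Θ ≤ 1/5. There exists C = C(Θ) > 0 such that for every k ≥ 1, the number of sequences ε = (ε₂,...,ε_k) ∈ {1,2}^{k-1} for which there exist 0 ≤ m' < m ≤ Θk such that the subword (ε_{m+2},...,ε_k) equals the shifted subword (ε_{m'+2},...,ε_{k+m'-m}) is at most C · 2^{k/2}. Equivalently, the proportion of such 'nongeneric' sequences among all 2^{k-1} sequences is at most C·2^{-k/2}. -/
private lemma per_ext {n m m' : ℕ} (hmm : m' < m) {ε ε' : Fin n → Fin 2}
    (hε : ∀ (t : ℕ) (h : m + t < n) (h' : m' + t < n),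
      ε ⟨m + t, h⟩ = ε ⟨m' + t, h'⟩)
    (hε' : ∀ (t : ℕ) (h : m + t < n) (h' : m' + t < n),
      ε' ⟨m + t, h⟩ = ε' ⟨m' + t, h'⟩)
    (hag : ∀ (i : ℕ) (h : i < n), i < m → ε ⟨i, h⟩ = ε' ⟨i, h⟩) :
    ε = ε' := by
  have key : ∀ i, ∀ (h : i < n), ε ⟨i, h⟩ = ε' ⟨i, h⟩ := by
    intro i
    induction i using Nat.strong_induction_on with
    | _ i ih =>
      intro h
      rcases lt_or_ge i m with him | him
      · exact hag i h him
      · have h1 : m + (i - m) < n := by omega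
        have h2 : m' + (i - m) < n := by omega
        have e1 : (⟨i, h⟩ : Fin n) = ⟨m + (i - m), h1⟩ := by
          ext; simp; omega
        rw [e1, hε _ h1 h2, hε' _ h1 h2]
        exact ih _ (by omega) _
  funext j
  exact key j.1 j.2

private lemma poly_le_rpow : ∃ C₀ : ℝ, 0 < C₀ ∧
    ∀ n : ℕ, ((n : ℝ) + 1) ^ 2 ≤ C₀ * (2 : ℝ) ^ ((3 * (n : ℝ)) / 10) := by
  set a : ℝ := (2 : ℝ) ^ ((3 : ℝ) / 10) with ha
  have ha1 : 1 < a := by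
    rw [ha]
    exact (Real.one_lt_rpow_iff_of_pos (by norm_num)).mpr
      (Or.inl ⟨by norm_num, by norm_num⟩)
  have ha0 : 0 < a := lt_trans one_pos ha1
  set r : ℝ := a⁻¹ with hrdef
  have hr0 : 0 < r := inv_pos.mpr ha0
  have hr1 : r < 1 := by
    rw [hrdef]
    exact inv_lt_one_of_one_lt₀ ha1
  have hnorm : ‖r‖ < 1 := by
    rw [Real.norm_eq_abs, abs_of_pos hr0]; exact hr1
  have hsum : Summable (fun n : ℕ => (n : ℝ) ^ 2 * r ^ n) :=
    summable_pow_mul_geometric_of_norm_lt_one 2 hnorm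
  obtain ⟨C1, hC1⟩ := hsum.tendsto_atTop_zero.bddAbove_range
  have hb : ∀ n : ℕ, (n : ℝ) ^ 2 * r ^ n ≤ C1 := fun n => hC1 ⟨n, rfl⟩
  have hC10 : 0 ≤ C1 := by
    have := hb 0
    simpa using this
  refine ⟨(C1 + 1) * a, by positivity, ?_⟩
  intro n
  have key := hb (n + 1)
  have hra : r * a = 1 := inv_mul_cancel₀ (ne_of_gt ha0)
  have hrapow : r ^ (n + 1) * a ^ (n + 1) = 1 := by
    rw [← mul_pow, hra, one_pow]
  have han : a ^ n = (2 : ℝ) ^ ((3 * (n : ℝ)) / 10) := by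
    rw [ha, ← Real.rpow_natCast ((2:ℝ) ^ ((3:ℝ)/10)) n, ← Real.rpow_mul (by norm_num)]
    ring_nf
  have step : ((n : ℝ) + 1) ^ 2 ≤ C1 * a ^ (n + 1) := by
    have h1 : ((n : ℝ) + 1) ^ 2 = (((n + 1 : ℕ) : ℝ)) ^ 2 * r ^ (n + 1) * a ^ (n + 1) := by
      rw [mul_assoc, hrapow, mul_one]; push_cast; ring
    rw [h1]
    have hap : 0 < a ^ (n + 1) := pow_pos ha0 _
    exact mul_le_mul_of_nonneg_right key hap.le
  calc ((n : ℝ) + 1) ^ 2 ≤ C1 * a ^ (n + 1) := step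
    _ ≤ (C1 + 1) * a ^ (n + 1) :=
        mul_le_mul_of_nonneg_right (by linarith) (pow_pos ha0 _).le
    _ = (C1 + 1) * a * a ^ n := by ring
    _ = (C1 + 1) * a * (2 : ℝ) ^ ((3 * (n : ℝ)) / 10) := by rw [han]

theorem stmt13 (Θ : ℝ) (hΘ0 : 0 < Θ) (hΘ : Θ ≤ 1 / 5) :
    ∃ C > (0 : ℝ), ∀ k : ℕ, 1 ≤ k →
      (Nat.card {ε : Fin (k - 1) → Fin 2 //
          ∃ m m' : ℕ, ∃ hmm : m' < m, (m : ℝ) ≤ Θ * k ∧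
            ∀ (t : ℕ) (h : m + t < k - 1),
              ε ⟨m + t, h⟩
                = ε ⟨m' + t, lt_of_le_of_lt (Nat.add_le_add_right hmm.le t) h⟩} : ℝ)
        ≤ C * (2 : ℝ) ^ ((k : ℝ) / 2) := by
  classical
  obtain ⟨C₀, hC₀pos, hC₀⟩ := poly_le_rpow
  refine ⟨C₀, hC₀pos, ?_⟩
  intro k hk
  set K := k / 5 with hK
  have hmK : ∀ m : ℕ, (m : ℝ) ≤ Θ * k → m ≤ K := by
    intro m hm
    have hk5 : Θ * k ≤ (k : ℝ) / 5 := by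
      have : (0 : ℝ) ≤ (k : ℝ) := Nat.cast_nonneg k
      nlinarith
    have h5 : ((5 * m : ℕ) : ℝ) ≤ (k : ℝ) := by push_cast; linarith
    have h5' : 5 * m ≤ k := by exact_mod_cast h5
    omega
  -- the main counting bound via an injection
  have hcard : Nat.card {ε : Fin (k - 1) → Fin 2 //
          ∃ m m' : ℕ, ∃ hmm : m' < m, (m : ℝ) ≤ Θ * k ∧
            ∀ (t : ℕ) (h : m + t < k - 1),
              ε ⟨m + t, h⟩
                = ε ⟨m' + t, lt_of_le_of_lt (Nat.add_le_add_right hmm.le t) h⟩}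
      ≤ (K + 1) * ((K + 1) * 2 ^ K) := by
    obtain ⟨f, hf⟩ : ∃ f : {ε : Fin (k - 1) → Fin 2 //
          ∃ m m' : ℕ, ∃ hmm : m' < m, (m : ℝ) ≤ Θ * k ∧
            ∀ (t : ℕ) (h : m + t < k - 1),
              ε ⟨m + t, h⟩
                = ε ⟨m' + t, lt_of_le_of_lt (Nat.add_le_add_right hmm.le t) h⟩}
          → Fin (K + 1) × Fin (K + 1) × (Fin K → Fin 2), Function.Injective f := by
      refine ⟨fun x =>
        ⟨⟨x.2.choose, by
            have h1 := hmK x.2.choose x.2.choose_spec.choose_spec.choose_spec.1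
            omega⟩,
         ⟨x.2.choose_spec.choose, by
            have h1 := hmK x.2.choose x.2.choose_spec.choose_spec.choose_spec.1
            have h2 : x.2.choose_spec.choose < x.2.choose :=
              x.2.choose_spec.choose_spec.choose
            omega⟩,
         fun i => if h : (i : ℕ) < k - 1 then x.1 ⟨i, h⟩ else 0⟩, ?_⟩
      rintro ⟨ε, hε⟩ ⟨ε', hε'⟩ hxy
      simp only [Prod.mk.injEq, Fin.mk.injEq, Subtype.mk.injEq] at hxy ⊢
      obtain ⟨hm, hm', hg⟩ := hxy
      have hmm : hε.choose_spec.choose < hε.choose := hε.choose_spec.choose_spec.choose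
      have spec2 : ∀ (t : ℕ) (h : hε.choose + t < k - 1)
          (h' : hε.choose_spec.choose + t < k - 1),
          ε ⟨hε.choose + t, h⟩ = ε ⟨hε.choose_spec.choose + t, h'⟩ :=
        fun t h _ => hε.choose_spec.choose_spec.choose_spec.2 t h
      have spec2' : ∀ (t : ℕ) (h : hε'.choose + t < k - 1)
          (h' : hε'.choose_spec.choose + t < k - 1),
          ε' ⟨hε'.choose + t, h⟩ = ε' ⟨hε'.choose_spec.choose + t, h'⟩ :=
        fun t h _ => hε'.choose_spec.choose_spec.choose_spec.2 t h
      have spec2'' : ∀ (t : ℕ) (h : hε.choose + t < k - 1)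
          (h' : hε.choose_spec.choose + t < k - 1),
          ε' ⟨hε.choose + t, h⟩ = ε' ⟨hε.choose_spec.choose + t, h'⟩ := by
        intro t h h'
        have hb : hε'.choose + t < k - 1 := hm ▸ h
        have hb' : hε'.choose_spec.choose + t < k - 1 := hm' ▸ h'
        have e1 : (⟨hε.choose + t, h⟩ : Fin (k - 1)) = ⟨hε'.choose + t, hb⟩ := by
          apply Fin.ext; simp only []; omega
        have e2 : (⟨hε.choose_spec.choose + t, h'⟩ : Fin (k - 1))
            = ⟨hε'.choose_spec.choose + t, hb'⟩ := by
          apply Fin.ext; simp only []; omega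
        rw [e1, e2]
        exact spec2' t hb hb'
      have hag : ∀ (i : ℕ) (h : i < k - 1), i < hε.choose → ε ⟨i, h⟩ = ε' ⟨i, h⟩ := by
        intro i h him
        have hiK : i < K := lt_of_lt_of_le him
          (hmK hε.choose hε.choose_spec.choose_spec.choose_spec.1)
        have := congrFun hg ⟨i, hiK⟩
        simpa [dif_pos h] using this
      exact per_ext hmm spec2 spec2'' hag
    calc Nat.card _ ≤ Nat.card (Fin (K + 1) × Fin (K + 1) × (Fin K → Fin 2)) :=
          Nat.card_le_card_of_injective f hf
      _ = (K + 1) * ((K + 1) * 2 ^ K) := by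
          simp [Nat.card_eq_fintype_card]
  -- now the real-number chain
  have h1 : (Nat.card {ε : Fin (k - 1) → Fin 2 //
          ∃ m m' : ℕ, ∃ hmm : m' < m, (m : ℝ) ≤ Θ * k ∧
            ∀ (t : ℕ) (h : m + t < k - 1),
              ε ⟨m + t, h⟩
                = ε ⟨m' + t, lt_of_le_of_lt (Nat.add_le_add_right hmm.le t) h⟩} : ℝ)
      ≤ ((K : ℝ) + 1) ^ 2 * 2 ^ K := by
    have := hcard
    have hcast : ((K + 1) * ((K + 1) * 2 ^ K) : ℕ) = (((K : ℝ) + 1) ^ 2 * 2 ^ K : ℝ) := by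
      push_cast; ring
    calc (Nat.card _ : ℝ) ≤ (((K + 1) * ((K + 1) * 2 ^ K) : ℕ) : ℝ) := by
          exact_mod_cast this
      _ = ((K : ℝ) + 1) ^ 2 * 2 ^ K := hcast
  have h2 : ((2 : ℝ)) ^ K ≤ (2 : ℝ) ^ ((k : ℝ) / 5) := by
    rw [← Real.rpow_natCast 2 K]
    exact Real.rpow_le_rpow_of_exponent_le one_le_two (Nat.cast_div_le)
  have h3 : ((K : ℝ) + 1) ^ 2 ≤ C₀ * (2 : ℝ) ^ ((3 * (k : ℝ)) / 10) := by
    have hKk : (K : ℝ) ≤ (k : ℝ) := by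
      exact_mod_cast Nat.div_le_self k 5
    calc ((K : ℝ) + 1) ^ 2 ≤ ((k : ℝ) + 1) ^ 2 := by nlinarith [Nat.cast_nonneg (α := ℝ) K]
      _ ≤ C₀ * (2 : ℝ) ^ ((3 * (k : ℝ)) / 10) := hC₀ k
  have hpos1 : (0 : ℝ) < (2 : ℝ) ^ ((k : ℝ) / 5) := Real.rpow_pos_of_pos (by norm_num) _
  have hpos2 : (0 : ℝ) ≤ ((K : ℝ) + 1) ^ 2 := by positivity
  calc (Nat.card {ε : Fin (k - 1) → Fin 2 //
          ∃ m m' : ℕ, ∃ hmm : m' < m, (m : ℝ) ≤ Θ * k ∧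
            ∀ (t : ℕ) (h : m + t < k - 1),
              ε ⟨m + t, h⟩
                = ε ⟨m' + t, lt_of_le_of_lt (Nat.add_le_add_right hmm.le t) h⟩} : ℝ)
      ≤ ((K : ℝ) + 1) ^ 2 * 2 ^ K := h1
    _ ≤ (C₀ * (2 : ℝ) ^ ((3 * (k : ℝ)) / 10)) * (2 : ℝ) ^ ((k : ℝ) / 5) := by
        apply mul_le_mul h3 h2 (by positivity) (by positivity)
    _ = C₀ * (2 : ℝ) ^ ((k : ℝ) / 2) := by
        rw [mul_assoc, ← Real.rpow_add (by norm_num : (0:ℝ) < 2)]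
        ring_nf
end

section
/- Let ε = (ε₂,...,ε_k) be a word over {1,2} and let 1 ≤ Δ ≤ m ≤ k-1. If the two subwords (ε_{m+2},...,ε_k) and (ε_{m-Δ+2},...,ε_{k-Δ}) are equal, then ε contains a block of length at least (⌊(k-m-1)/Δ⌋ + 1)·Δ which is periodic with period Δ; consequently the number of such words is at most 2^Δ · 2^{k - (⌊(k-m-1)/Δ⌋+1)Δ - 1} < 2^{2m - (m-Δ)}. -/
theorem stmt14 (k m Δ : ℕ) (hk : 2 ≤ k) (hΔ : 1 ≤ Δ) (hΔm : Δ ≤ m) (hm : m ≤ k - 1) :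
    -- (a) any word whose subword (ε_{m+2},…,ε_k) equals the shifted subword
    -- (ε_{m-Δ+2},…,ε_{k-Δ}) contains a block of length (⌊(k-m-1)/Δ⌋+1)·Δ
    -- which is periodic with period Δ
    (∀ ε : Fin (k - 1) → Fin 2,
      (∀ (t : ℕ) (h : m + t < k - 1),
          ε ⟨m + t, h⟩ = ε ⟨m - Δ + t, by omega⟩) →
      ∀ j : ℕ, 2 ≤ j → k - ((k - m - 1) / Δ + 1) * Δ + 1 ≤ j → j ≤ k - Δ →
        ∀ (h1 : j - 2 < k - 1) (h2 : j + Δ - 2 < k - 1),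
          ε ⟨j - 2, h1⟩ = ε ⟨j + Δ - 2, h2⟩) ∧
    -- (b) consequently, the number of such words is at most
    -- 2^Δ · 2^{k-(⌊(k-m-1)/Δ⌋+1)Δ-1} < 2^{2m-(m-Δ)}
    (Nat.card {ε : Fin (k - 1) → Fin 2 //
        ∀ (t : ℕ) (h : m + t < k - 1),
          ε ⟨m + t, h⟩ = ε ⟨m - Δ + t, by omega⟩}
      ≤ 2 ^ Δ * 2 ^ (k - ((k - m - 1) / Δ + 1) * Δ - 1)) ∧
    (2 ^ Δ * 2 ^ (k - ((k - m - 1) / Δ + 1) * Δ - 1) < 2 ^ (2 * m - (m - Δ))) := by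
  have hΔpos : 0 < Δ := hΔ
  have hQ1 : k - m - 1 < ((k - m - 1) / Δ + 1) * Δ := by
    calc k - m - 1 = Δ * ((k - m - 1) / Δ) + (k - m - 1) % Δ :=
          (Nat.div_add_mod (k - m - 1) Δ).symm
      _ < Δ * ((k - m - 1) / Δ) + Δ :=
          Nat.add_lt_add_left (Nat.mod_lt _ hΔpos) _
      _ = ((k - m - 1) / Δ + 1) * Δ := by ring
  have hQ2 : ((k - m - 1) / Δ + 1) * Δ ≤ k - m - 1 + Δ := by
    rw [add_mul, one_mul]
    exact Nat.add_le_add_right (Nat.div_mul_le_self _ _) Δ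
  set Q := ((k - m - 1) / Δ + 1) * Δ with hQdef
  refine ⟨?_, ?_, ?_⟩
  · intro ε hε j hj2 hjl hju h1 h2
    have h' : m + (j + Δ - 2 - m) < k - 1 := by omega
    calc ε ⟨j - 2, h1⟩
        = ε ⟨m - Δ + (j + Δ - 2 - m), by omega⟩ := congrArg ε (Fin.ext (by simp; omega))
      _ = ε ⟨m + (j + Δ - 2 - m), h'⟩ := (hε (j + Δ - 2 - m) h').symm
      _ = ε ⟨j + Δ - 2, h2⟩ := congrArg ε (Fin.ext (by simp; omega))
  · have hinj : Function.Injective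
        (fun ε : {ε : Fin (k - 1) → Fin 2 //
            ∀ (t : ℕ) (h : m + t < k - 1),
              ε ⟨m + t, h⟩ = ε ⟨m - Δ + t, by omega⟩} =>
          (fun i : Fin m => ε.1 ⟨i.1, by omega⟩ : Fin m → Fin 2)) := by
      rintro ⟨ε, hε⟩ ⟨ε', hε'⟩ h
      simp only [Subtype.mk_eq_mk]
      have key : ∀ n, ∀ hn : n < k - 1, ε ⟨n, hn⟩ = ε' ⟨n, hn⟩ := by
        intro n
        induction n using Nat.strong_induction_on with
        | _ n ih =>
          intro hn
          by_cases hnm : n < m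
          · exact congrFun h ⟨n, hnm⟩
          · push_neg at hnm
            have h' : m + (n - m) < k - 1 := by omega
            have hlt : m - Δ + (n - m) < k - 1 := by omega
            calc ε ⟨n, hn⟩
                = ε ⟨m + (n - m), h'⟩ := congrArg ε (Fin.ext (by simp; omega))
              _ = ε ⟨m - Δ + (n - m), hlt⟩ := hε (n - m) h'
              _ = ε' ⟨m - Δ + (n - m), hlt⟩ := ih _ (by omega) hlt
              _ = ε' ⟨m + (n - m), h'⟩ := (hε' (n - m) h').symm
              _ = ε' ⟨n, hn⟩ := congrArg ε' (Fin.ext (by simp; omega))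
      funext i
      exact key i.1 i.2
    calc Nat.card _ ≤ Nat.card (Fin m → Fin 2) := Nat.card_le_card_of_injective _ hinj
      _ = 2 ^ m := by simp
      _ ≤ 2 ^ (Δ + (k - Q - 1)) := Nat.pow_le_pow_right (by norm_num) (by omega)
      _ = 2 ^ Δ * 2 ^ (k - Q - 1) := pow_add 2 _ _
  · calc 2 ^ Δ * 2 ^ (k - Q - 1) = 2 ^ (Δ + (k - Q - 1)) := (pow_add 2 _ _).symm
      _ < 2 ^ (2 * m - (m - Δ)) := Nat.pow_lt_pow_right (by norm_num) (by omega)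
end

section
/- Fix k ≥ 1 and work in H = (ℂ⁴)^{⊗k}. Let U be the unitary map U(v₁⊗···⊗v_k) = v₂⊗···⊗v_k⊗F₄*v₁ and Π_{L₁} = π₀⊗Id^{⊗(k-1)}, Π_{L₂} = π₃⊗Id^{⊗(k-1)}, Π_I = π_I⊗Id^{⊗(k-1)} with π_I = π₁+π₂. Define t_n = Π_{L₂} U (Π_I U)^{n-1} Π_{L₁} for n ≥ 1. Let ε = (0, ε₂,...,ε_k) ∈ {0,...,3}^k with ε₁ = 0, and suppose there is an index 2 ≤ ℓ ≤ k with ε_ℓ ∈ {0,3}; let ℓ₀ be the smallest such index. Then t_n|ε⟩ = 0 for all n ≠ ℓ₀ - 1, and ‖t_{ℓ₀-1}|ε⟩‖ = 0 if ε_{ℓ₀} = 0 while ‖t_{ℓ₀-1}|ε⟩‖ = 1 if ε_{ℓ₀} = 3. -/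
open Complex

/-- the 4×4 discrete Fourier transform. -/
noncomputable def F4 : Matrix (Fin 4) (Fin 4) ℂ :=
  fun a b => (1 / 2 : ℂ) *
    Complex.exp (-(2 * Real.pi * Complex.I * ((a : ℕ) : ℂ) * ((b : ℕ) : ℂ)) / 4)

/-- the identification of `ℂ^{4^k}` with `(ℂ⁴)^{⊗ k}`: the simple tensor
`v 0 ⊗ ⋯ ⊗ v (k-1)` corresponds to this vector. -/
noncomputable def tens4 (k : ℕ) (v : Fin k → Fin 4 → ℂ) : Fin (4 ^ k) → ℂ :=
  fun j => ∏ i : Fin k,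
    v i ⟨j.val / 4 ^ (k - 1 - i.val) % 4, Nat.mod_lt _ (by norm_num)⟩

/-- the orthogonal projection onto the positions whose most significant base-4 digit
lies in `s` (acting only on the first qu4it). -/
noncomputable def projDigit (k : ℕ) (s : Finset (Fin 4)) :
    Matrix (Fin (4 ^ k)) (Fin (4 ^ k)) ℂ :=
  Matrix.diagonal fun j =>
    if (⟨j.val / 4 ^ (k - 1) % 4, Nat.mod_lt _ (by norm_num)⟩ : Fin 4) ∈ s then 1 else 0

/-!
`U` only rotates the tensor factors, applying `F₄*` to the factor that leaves the front, so
`U^m |ε⟩` (for `m < k`) is again a product state whose first factor is the basis vector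
`e_{ε_{m+1}}`; every projection `Π_{L₁}, Π_I, Π_{L₂}` therefore either fixes it or kills it
according to that one digit. Since `ε₁ = 0`, the state survives `Π_I` exactly while the digits
are `1` or `2`, and is killed at the first digit `ε_{ℓ₀} ∈ {0, 3}`, where `Π_{L₂}` keeps it iff
`ε_{ℓ₀} = 3`. What survives is a product of unit vectors (all entries of `F₄` have modulus `1/2`),
hence has norm `1`. In the code digits are indexed from `0`: `εs ⟨m, _⟩` is `ε_{m+1}`.
-/

open Matrix

theorem Matrix.pow_mulVec_eq_of_mulVec_eq {ι R : Type*} [Fintype ι] [DecidableEq ι] [Semiring R]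
    {M : Matrix ι ι R} {x : ℕ → ι → R} {N : ℕ} (h : ∀ m < N, M *ᵥ x m = x (m + 1)) :
    (M ^ N) *ᵥ x 0 = x N := by
  induction N with
  | zero => rw [pow_zero, one_mulVec]
  | succ N ih =>
    rw [pow_succ', ← mulVec_mulVec, ih fun m hm => h m (by omega), h N N.lt_succ_self]

theorem norm_F4_apply (a b : Fin 4) : ‖F4 a b‖ = 1 / 2 := by
  have h : (-(2 * Real.pi * Complex.I * ((a : ℕ) : ℂ) * ((b : ℕ) : ℂ)) / 4 : ℂ)
      = ((-(2 * Real.pi * (a : ℕ) * (b : ℕ)) / 4 : ℝ) : ℂ) * Complex.I := by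
    push_cast
    ring
  rw [F4, norm_mul, h, Complex.norm_exp_ofReal_mul_I, mul_one]
  norm_num

theorem sum_norm_sq_single (a : Fin 4) :
    ∑ b : Fin 4, ‖(Pi.single a 1 : Fin 4 → ℂ) b‖ ^ 2 = 1 := by
  simp [Pi.single_apply, apply_ite]

theorem sum_norm_sq_F4_conjTranspose_mulVec_single (a : Fin 4) :
    ∑ b : Fin 4, ‖(F4ᴴ *ᵥ Pi.single a 1) b‖ ^ 2 = 1 := by
  simp only [mulVec_single_one, col_apply, conjTranspose_apply, norm_star, norm_F4_apply]
  norm_num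

-- `finFunctionFinEquiv` lists base-4 digits least significant first, whereas the factor `i` of
-- `tens4` reads the digit of weight `4 ^ (k - 1 - i)`.
theorem tens4_finFunctionFinEquiv (k : ℕ) (v : Fin k → Fin 4 → ℂ) (f : Fin k → Fin 4) :
    tens4 k v (finFunctionFinEquiv f) = ∏ i, v i.rev (f i) := by
  rw [tens4, ← Equiv.prod_comp Fin.revPerm]
  refine Finset.prod_congr rfl fun i _ => congrArg _ (Fin.ext ?_)
  have h := finFunctionFinEquiv_symm_apply_val (finFunctionFinEquiv f) i
  rw [Equiv.symm_apply_apply] at h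
  rw [h]
  simp only [Fin.revPerm_apply, Fin.val_rev]
  rw [show k - 1 - (k - (i.val + 1)) = i.val by omega]

theorem sum_norm_sq_tens4 (k : ℕ) (v : Fin k → Fin 4 → ℂ) :
    ∑ j, ‖tens4 k v j‖ ^ 2 = ∏ i, ∑ b, ‖v i b‖ ^ 2 := by
  rw [← finFunctionFinEquiv.sum_comp]
  simp only [tens4_finFunctionFinEquiv, norm_prod, ← Finset.prod_pow]
  rw [← Fintype.prod_sum fun (i : Fin k) (b : Fin 4) => ‖v i.rev b‖ ^ 2]
  exact Equiv.prod_comp Fin.revPerm fun i => ∑ b, ‖v i b‖ ^ 2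

theorem projDigit_mulVec_tens4 {k : ℕ} (hk : 0 < k) (s : Finset (Fin 4))
    {v : Fin k → Fin 4 → ℂ} {a : Fin 4} (hv : v ⟨0, hk⟩ = Pi.single a 1) :
    projDigit k s *ᵥ tens4 k v = if a ∈ s then tens4 k v else 0 := by
  funext j
  rw [projDigit, mulVec_diagonal]
  obtain hd | hd := eq_or_ne (⟨j.val / 4 ^ (k - 1) % 4, Nat.mod_lt _ (by norm_num)⟩ : Fin 4) a
  · rw [hd]
    split_ifs <;> simp
  · have hj : tens4 k v j = 0 :=
      Finset.prod_eq_zero (Finset.mem_univ ⟨0, hk⟩) (by rw [hv]; exact Pi.single_eq_of_ne hd 1)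
    split_ifs <;> simp [hj]

noncomputable def walshShift (k : ℕ) (v : Fin k → Fin 4 → ℂ) : Fin k → Fin 4 → ℂ :=
  fun i => if h : i.val + 1 < k then v ⟨i.val + 1, h⟩ else F4ᴴ *ᵥ v ⟨0, i.pos⟩

theorem walshShift_iterate_apply_of_lt {k : ℕ} (v : Fin k → Fin 4 → ℂ) (m : ℕ) (i : Fin k)
    (h : i.val + m < k) : (walshShift k)^[m] v i = v ⟨i.val + m, h⟩ := by
  induction m generalizing v with
  | zero => rfl
  | succ m ih =>
    rw [Function.iterate_succ_apply, ih _ (by omega), walshShift, dif_pos (by omega)]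
    simp only [Nat.add_assoc]

theorem walshShift_iterate_apply_of_le {k : ℕ} (v : Fin k → Fin 4 → ℂ) {m : ℕ} (hm : m ≤ k)
    (i : Fin k) (h : k ≤ i.val + m) :
    (walshShift k)^[m] v i = F4ᴴ *ᵥ v ⟨i.val + m - k, by omega⟩ := by
  induction m generalizing i with
  | zero => omega
  | succ m ih =>
    rw [Function.iterate_succ_apply', walshShift]
    split_ifs with hi
    · rw [ih (by omega) _ (show k ≤ i.val + 1 + m by omega)]
      congr 3
      simp only
      omega
    · rw [walshShift_iterate_apply_of_lt _ _ _ (show 0 + m < k by omega)]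
      congr 3
      simp only
      omega

section BasisState

variable {k : ℕ} (εs : Fin k → Fin 4)

noncomputable def shiftState (m : ℕ) : Fin (4 ^ k) → ℂ :=
  tens4 k ((walshShift k)^[m] fun i => Pi.single (εs i) 1)

theorem mulVec_shiftState {U : Matrix (Fin (4 ^ k)) (Fin (4 ^ k)) ℂ}
    (hU : ∀ v, U *ᵥ tens4 k v = tens4 k (walshShift k v)) (m : ℕ) :
    U *ᵥ shiftState εs m = shiftState εs (m + 1) := by
  rw [shiftState, hU, ← Function.iterate_succ_apply' (walshShift k)]
  rfl

theorem projDigit_mulVec_shiftState (s : Finset (Fin 4)) {m : ℕ} (hm : m < k) :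
    projDigit k s *ᵥ shiftState εs m = if εs ⟨m, hm⟩ ∈ s then shiftState εs m else 0 :=
  projDigit_mulVec_tens4 (by omega) s <| by
    rw [walshShift_iterate_apply_of_lt _ _ _ (show 0 + m < k by omega)]
    simp only [zero_add]

theorem sum_norm_sq_shiftState {m : ℕ} (hm : m ≤ k) : ∑ j, ‖shiftState εs m j‖ ^ 2 = 1 := by
  rw [shiftState, sum_norm_sq_tens4]
  refine Finset.prod_eq_one fun i _ => ?_
  by_cases h : i.val + m < k
  · rw [walshShift_iterate_apply_of_lt _ _ _ h, sum_norm_sq_single]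
  · rw [walshShift_iterate_apply_of_le _ hm _ (by omega),
      sum_norm_sq_F4_conjTranspose_mulVec_single]

theorem pow_mulVec_shiftState_zero {U : Matrix (Fin (4 ^ k)) (Fin (4 ^ k)) ℂ}
    (hU : ∀ v, U *ᵥ tens4 k v = tens4 k (walshShift k v)) {s : Finset (Fin 4)} {n : ℕ}
    (hn : n < k) (hs : ∀ m (hm : m < k), 1 ≤ m → m ≤ n → εs ⟨m, hm⟩ ∈ s) :
    (projDigit k s * U) ^ n *ᵥ shiftState εs 0 = shiftState εs n :=
  pow_mulVec_eq_of_mulVec_eq fun m hm => by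
    rw [← mulVec_mulVec, mulVec_shiftState εs hU, projDigit_mulVec_shiftState εs s (by omega),
      if_pos (hs _ _ (by omega) (by omega))]

theorem pow_add_mulVec_shiftState_zero_eq_zero {U : Matrix (Fin (4 ^ k)) (Fin (4 ^ k)) ℂ}
    (hU : ∀ v, U *ᵥ tens4 k v = tens4 k (walshShift k v)) {s : Finset (Fin 4)} {n : ℕ}
    (h0 : 0 < n) (hn : n < k) (hs : ∀ m (hm : m < k), 1 ≤ m → m < n → εs ⟨m, hm⟩ ∈ s)
    (hstop : εs ⟨n, hn⟩ ∉ s) (r : ℕ) :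
    (projDigit k s * U) ^ (r + n) *ᵥ shiftState εs 0 = 0 := by
  obtain ⟨n, rfl⟩ : ∃ n', n = n' + 1 := ⟨n - 1, by omega⟩
  rw [pow_add, pow_succ', ← mulVec_mulVec _ (_ ^ r), ← mulVec_mulVec _ (_ * U),
    pow_mulVec_shiftState_zero εs hU (by omega) fun m hm h1 h2 => hs m hm h1 (by omega),
    ← mulVec_mulVec, mulVec_shiftState εs hU, projDigit_mulVec_shiftState εs s hn, if_neg hstop,
    mulVec_zero]

end BasisState

theorem stmt17 (k : ℕ) (hk : 1 ≤ k)
    (U : Matrix (Fin (4 ^ k)) (Fin (4 ^ k)) ℂ)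
    -- U is the Walsh quantization: it shifts the qu4its, applying F₄* to the first one
    (hU : ∀ v : Fin k → Fin 4 → ℂ,
      U.mulVec (tens4 k v)
        = tens4 k (fun i =>
            if h : i.val + 1 < k then v ⟨i.val + 1, h⟩
            else F4.conjTranspose.mulVec (v ⟨0, i.pos⟩)))
    (εs : Fin k → Fin 4) (hε0 : εs ⟨0, hk⟩ = 0)
    (ℓ₀ : ℕ) (hℓ₀2 : 2 ≤ ℓ₀) (hℓ₀k : ℓ₀ ≤ k)
    -- ℓ₀ is the smallest index (between 2 and k) with ε_{ℓ₀} ∈ {0, 3}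
    (hval : εs ⟨ℓ₀ - 1, by omega⟩ = 0 ∨ εs ⟨ℓ₀ - 1, by omega⟩ = 3)
    (hmin : ∀ ℓ : ℕ, ∀ _h1 : 2 ≤ ℓ, ∀ _h2 : ℓ < ℓ₀,
      εs ⟨ℓ - 1, by omega⟩ = 1 ∨ εs ⟨ℓ - 1, by omega⟩ = 2) :
    -- t_n |ε⟩ = 0 for every n ≠ ℓ₀ - 1
    (∀ n : ℕ, 1 ≤ n → n ≠ ℓ₀ - 1 →
      (projDigit k {3} * U * (projDigit k {1, 2} * U) ^ (n - 1)
        * projDigit k {0}).mulVec (tens4 k (fun i => Pi.single (εs i) 1)) = 0) ∧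
    -- the norm of t_{ℓ₀-1} |ε⟩ is 0 if ε_{ℓ₀} = 0, and 1 if ε_{ℓ₀} = 3
    (∑ j : Fin (4 ^ k),
        ‖(((projDigit k {3} * U * (projDigit k {1, 2} * U) ^ (ℓ₀ - 2)
            * projDigit k {0}).mulVec (tens4 k (fun i => Pi.single (εs i) 1))) j)‖ ^ 2
      = if εs ⟨ℓ₀ - 1, by omega⟩ = 0 then 0 else 1) := by
  have hinner : ∀ m (hm : m < k), 1 ≤ m → m < ℓ₀ - 1 →
      εs ⟨m, hm⟩ ∈ ({1, 2} : Finset (Fin 4)) :=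
    fun m _ _ _ => by simpa using hmin (m + 1) (by omega) (by omega)
  have hlast : εs ⟨ℓ₀ - 1, by omega⟩ ∉ ({1, 2} : Finset (Fin 4)) := by
    rcases hval with h | h <;> rw [h] <;> decide
  have hstart : projDigit k {0} *ᵥ shiftState εs 0 = shiftState εs 0 := by
    rw [projDigit_mulVec_shiftState εs _ hk, if_pos (by rw [hε0]; decide)]
  have hε : tens4 k (fun i => Pi.single (εs i) 1) = shiftState εs 0 := rfl
  simp only [hε, ← mulVec_mulVec, hstart]
  constructor
  · intro n hn hne
    rcases lt_or_gt_of_ne hne with hlt | hgt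
    · rw [pow_mulVec_shiftState_zero εs hU (by omega) fun m hm h1 h2 => hinner m hm h1 (by omega),
        mulVec_shiftState εs hU, projDigit_mulVec_shiftState εs _ (by omega), if_neg]
      simp only [show n - 1 + 1 = n by omega]
      exact Finset.disjoint_left.mp (by decide) (hinner n _ hn hlt)
    · rw [show n - 1 = n - ℓ₀ + (ℓ₀ - 1) by omega,
        pow_add_mulVec_shiftState_zero_eq_zero εs hU (by omega) _ hinner hlast, mulVec_zero,
        mulVec_zero]
  · rw [pow_mulVec_shiftState_zero εs hU (by omega) fun m hm h1 h2 => hinner m hm h1 (by omega),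
      mulVec_shiftState εs hU, projDigit_mulVec_shiftState εs _ (by omega)]
    simp only [show ℓ₀ - 2 + 1 = ℓ₀ - 1 by omega]
    rcases hval with h | h <;> simp [h, sum_norm_sq_shiftState εs (show ℓ₀ - 1 ≤ k by omega)]
end
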